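/- (Lemma 2 of the paper.) In the closed-loop coordinated system, for every coordination strategy ψ, every time t ∈ {1,…,T}, and every mean-field history z_{1:t} that occurs with positive probability, the conditional distribution of the joint state X_t given Z_{1:t} = z_{1:t} (and given the prescriptions Γ_{1:t}, which are functions of z_{1:t}) is the uniform distribution on H(z_t): P(X_t = x | Z_{1:t} = z_{1:t}) = 1(x ∈ H(z_t)) / |H(z_t)| for every x : Fin n → 𝒳. In particular, this conditional distribution depends only on z_t and not on z_{1:t-1} or on the strategy ψ. -/

import Mathlib

open scoped ENNReal

def emp {X : Type*} [DecidableEq X] {n : ℕ} (x : Fin n → X) : X → ℕ :=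
  fun a => (Finset.univ.filter (fun i => x i = a)).card

def Hset {X : Type*} [Fintype X] [DecidableEq X] (n : ℕ) (m : X → ℕ) : Finset (Fin n → X) :=
  Finset.univ.filter (fun x => emp x = m)

noncomputable def iid {W : Type*} [Fintype W] (n : ℕ) (ν : PMF W) : PMF (Fin n → W) :=
  PMF.ofFintype (fun w => ∏ i, ν (w i)) (by
    have h : ∑ j : W, ν j = 1 := by first | (rw [← ν.tsum_coe, tsum_fintype]) | simpa [tsum_fintype] using ν.tsum_coe
    rw [← Fintype.prod_sum]; simp [h])

variable {X U W : Type*} [Fintype X] [DecidableEq X] [Fintype U] [Fintype W]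

/-- The closed-loop law of the state trajectory `(X_0, …, X_t)` in the coordinated system:
initial states i.i.d. `PX`; the coordinator applies the prescription `ψ t z_{0:t} : X → U`
to each local state; local dynamics `f` driven by i.i.d. noises `PW t`. -/
noncomputable def hist (n : ℕ) (PX : PMF X) (PW : ℕ → PMF W)
    (f : ℕ → X → U → W → (X → ℕ) → X)
    (ψ : (t : ℕ) → (Fin (t + 1) → (X → ℕ)) → X → U) :
    (t : ℕ) → PMF (Fin (t + 1) → (Fin n → X))
  | 0 => (iid n PX).map (fun x _ => x)
  | t + 1 =>
    (hist n PX PW f ψ t).bind (fun xs =>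
      (iid n (PW t)).map (fun w =>
        Fin.snoc xs (fun i =>
          f t (xs (Fin.last t) i)
            (ψ t (fun s => emp (xs s)) (xs (Fin.last t) i))
            (w i) (emp (xs (Fin.last t))))))

/-!
Relabelling the subsystems by a permutation `σ` of `Fin n` preserves the i.i.d. laws of the
initial states and of the noises, and commutes with the empirical counts and hence with every
transition; so the closed-loop law of the trajectory is invariant under `σ`. Conditioned on the
mean-field history, the law of `X_t` is therefore permutation invariant and supported on
`H(z_t)`, which is a single orbit of the permutation action: it is uniform there.
-/

open Finset

lemma PMF.map_apply_of_injective {α β : Type*} (p : PMF α) {g : α → β} (hg : g.Injective)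
    (a : α) : p.map g (g a) = p a := by
  rw [PMF.map_apply, tsum_eq_single a fun b hb => if_neg fun h => hb (hg h).symm, if_pos rfl]

lemma mem_Hset {𝒳 : Type*} [Fintype 𝒳] [DecidableEq 𝒳] {n : ℕ} {m : 𝒳 → ℕ} {x : Fin n → 𝒳} :
    x ∈ Hset n m ↔ emp x = m := by
  simp [Hset]

section Relabel

variable {α : Type*} {n : ℕ}

def relabel (σ : Equiv.Perm (Fin n)) : (Fin n → α) ≃ (Fin n → α) :=
  σ.symm.arrowCongr (Equiv.refl α)

@[simp] lemma relabel_apply (σ : Equiv.Perm (Fin n)) (x : Fin n → α) :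
    relabel σ x = x ∘ σ := rfl

def relabelPath (σ : Equiv.Perm (Fin n)) {ι : Type*} : (ι → Fin n → α) ≃ (ι → Fin n → α) :=
  Equiv.piCongrRight fun _ => relabel σ

@[simp] lemma relabelPath_apply (σ : Equiv.Perm (Fin n)) {ι : Type*} (xs : ι → Fin n → α)
    (s : ι) : relabelPath σ xs s = xs s ∘ σ := rfl

lemma relabelPath_snoc (σ : Equiv.Perm (Fin n)) {t : ℕ} (xs : Fin t → Fin n → α)
    (x : Fin n → α) : relabelPath σ (Fin.snoc xs x) = Fin.snoc (relabelPath σ xs) (relabel σ x) :=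
  Fin.comp_snoc (relabel σ) xs x

lemma emp_comp_perm [DecidableEq α] (x : Fin n → α) (σ : Equiv.Perm (Fin n)) :
    emp (x ∘ σ) = emp x := by
  funext a
  exact card_equiv σ (by simp)

lemma exists_perm_comp_eq_of_emp_eq [DecidableEq α] {x y : Fin n → α} (h : emp x = emp y) :
    ∃ σ : Equiv.Perm (Fin n), x ∘ σ = y := by
  have e (a : α) : {i // y i = a} ≃ {i // x i = a} :=
    Fintype.equivOfCardEq <| by simpa [emp, Fintype.card_subtype] using (congrFun h a).symm
  exact ⟨Equiv.ofFiberEquiv e, funext (Equiv.ofFiberEquiv_map e)⟩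

lemma iid_map_relabel [Fintype α] (ν : PMF α) (σ : Equiv.Perm (Fin n)) :
    (iid n ν).map (relabel σ) = iid n ν := by
  refine PMF.ext fun w => ?_
  obtain ⟨v, rfl⟩ : ∃ v, relabel σ v = w := (relabel σ).surjective w
  rw [PMF.map_apply_of_injective _ (relabel σ).injective]
  exact (Equiv.prod_comp σ fun i => ν (v i)).symm

end Relabel

section ClosedLoop

variable {𝒳 𝒰 𝒲 : Type*} [DecidableEq 𝒳] {n : ℕ} (PX : PMF 𝒳) (PW : ℕ → PMF 𝒲)
  (f : ℕ → 𝒳 → 𝒰 → 𝒲 → (𝒳 → ℕ) → 𝒳) (ψ : (t : ℕ) → (Fin (t + 1) → (𝒳 → ℕ)) → 𝒳 → 𝒰)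

def nextState {t : ℕ} (xs : Fin (t + 1) → Fin n → 𝒳) (w : Fin n → 𝒲) : Fin n → 𝒳 :=
  fun i => f t (xs (Fin.last t) i) (ψ t (fun s => emp (xs s)) (xs (Fin.last t) i)) (w i)
    (emp (xs (Fin.last t)))

noncomputable def transition [Fintype 𝒲] {t : ℕ} (xs : Fin (t + 1) → Fin n → 𝒳) :
    PMF (Fin (t + 1 + 1) → Fin n → 𝒳) :=
  (iid n (PW t)).map fun w => Fin.snoc xs (nextState f ψ xs w)

lemma hist_succ [Fintype 𝒳] [Fintype 𝒲] (t : ℕ) :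
    hist n PX PW f ψ (t + 1) = (hist n PX PW f ψ t).bind (transition PW f ψ) := rfl

variable {PX PW f ψ}

lemma nextState_relabel {t : ℕ} (σ : Equiv.Perm (Fin n)) (xs : Fin (t + 1) → Fin n → 𝒳)
    (w : Fin n → 𝒲) :
    nextState f ψ (relabelPath σ xs) (relabel σ w) = relabel σ (nextState f ψ xs w) := by
  funext i
  simp [nextState, emp_comp_perm]

lemma transition_map_relabelPath [Fintype 𝒲] {t : ℕ} (σ : Equiv.Perm (Fin n))
    (xs : Fin (t + 1) → Fin n → 𝒳) :
    (transition PW f ψ xs).map (relabelPath σ) = transition PW f ψ (relabelPath σ xs) := by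
  rw [transition, transition, PMF.map_comp]
  conv_rhs => rw [← iid_map_relabel (PW t) σ, PMF.map_comp]
  congr 1
  funext w
  simp only [Function.comp_apply, nextState_relabel, relabelPath_snoc]

lemma hist_map_relabelPath [Fintype 𝒳] [Fintype 𝒲] (σ : Equiv.Perm (Fin n)) :
    ∀ t, (hist n PX PW f ψ t).map (relabelPath σ) = hist n PX PW f ψ t
  | 0 => by
    rw [hist, PMF.map_comp]
    conv_rhs => rw [← iid_map_relabel PX σ, PMF.map_comp]
    rfl
  | t + 1 => by
    simp only [hist_succ, PMF.map_bind, transition_map_relabelPath]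
    conv_rhs => rw [← hist_map_relabelPath σ t, PMF.bind_map]
    rfl

lemma hist_relabelPath [Fintype 𝒳] [Fintype 𝒲] (σ : Equiv.Perm (Fin n)) (t : ℕ)
    (xs : Fin (t + 1) → Fin n → 𝒳) :
    hist n PX PW f ψ t (relabelPath σ xs) = hist n PX PW f ψ t xs := by
  conv_rhs => rw [← PMF.map_apply_of_injective _ (relabelPath σ).injective xs,
    hist_map_relabelPath]

end ClosedLoop

lemma sum_filter_div_sum_eq_ite {β γ : Type*} [DecidableEq γ] {A : Finset β} {g : β → γ}
    {p : β → ℝ≥0∞} {H : Finset γ} (hp : ∀ b, p b ≠ ∞) (hgA : ∀ b ∈ A, g b ∈ H)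
    (hconst : ∀ y ∈ H, ∀ y' ∈ H, ∑ b ∈ A with g b = y, p b = ∑ b ∈ A with g b = y', p b)
    (hpos : 0 < ∑ b ∈ A, p b) (x : γ) :
    (∑ b ∈ A with g b = x, p b) / ∑ b ∈ A, p b = if x ∈ H then (#H : ℝ≥0∞)⁻¹ else 0 := by
  by_cases hx : x ∈ H
  · have hsum : ∑ b ∈ A, p b = #H * ∑ b ∈ A with g b = x, p b := by
      rw [← sum_fiberwise_of_maps_to hgA, sum_congr rfl fun y hy => hconst y hy x hx, sum_const,
        nsmul_eq_mul]
    have hfiber_ne_zero : ∑ b ∈ A with g b = x, p b ≠ 0 := by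
      rintro h
      simp [hsum, h] at hpos
    rw [hsum]
    calc (∑ b ∈ A with g b = x, p b) / (#H * ∑ b ∈ A with g b = x, p b)
        = 1 * (∑ b ∈ A with g b = x, p b) / (#H * ∑ b ∈ A with g b = x, p b) := by rw [one_mul]
      _ = 1 / #H :=
        ENNReal.mul_div_mul_right _ _ hfiber_ne_zero (ENNReal.sum_ne_top.2 fun b _ => hp b)
      _ = if x ∈ H then (#H : ℝ≥0∞)⁻¹ else 0 := by rw [if_pos hx, one_div]
  · have hfiber : {b ∈ A | g b = x} = ∅ := filter_eq_empty_iff.2 fun b hb hgb => hx (hgb ▸ hgA b hb)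
    rw [if_neg hx, hfiber, sum_empty, ENNReal.zero_div]

theorem stmt4_general (n : ℕ) (PX : PMF X) (PW : ℕ → PMF W)
    (f : ℕ → X → U → W → (X → ℕ) → X)
    (ψ : (t : ℕ) → (Fin (t + 1) → (X → ℕ)) → X → U)
    (t : ℕ) (z : Fin (t + 1) → (X → ℕ))
    (hz : 0 < ∑ xs ∈ Finset.univ.filter
        (fun xs : Fin (t + 1) → (Fin n → X) => ∀ s, emp (xs s) = z s),
        hist n PX PW f ψ t xs) :
    ∀ x : Fin n → X,
      (∑ xs ∈ Finset.univ.filter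
          (fun xs : Fin (t + 1) → (Fin n → X) =>
            (∀ s, emp (xs s) = z s) ∧ xs (Fin.last t) = x),
          hist n PX PW f ψ t xs)
        / (∑ xs ∈ Finset.univ.filter
            (fun xs : Fin (t + 1) → (Fin n → X) => ∀ s, emp (xs s) = z s),
            hist n PX PW f ψ t xs)
      = if x ∈ Hset n (z (Fin.last t)) then ((Hset n (z (Fin.last t))).card : ℝ≥0∞)⁻¹
        else 0 := by
  intro x
  rw [← filter_filter]
  refine sum_filter_div_sum_eq_ite (PMF.apply_ne_top _) (fun xs hxs => ?_) ?_ hz x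
  · exact mem_Hset.2 ((mem_filter.1 hxs).2 (Fin.last t))
  · intro y hy y' hy'
    obtain ⟨σ, rfl⟩ := exists_perm_comp_eq_of_emp_eq ((mem_Hset.1 hy).trans (mem_Hset.1 hy').symm)
    refine sum_equiv (relabelPath σ) (fun xs => ?_) fun xs _ => (hist_relabelPath σ t xs).symm
    simp [emp_comp_perm, σ.surjective.injective_comp_right.eq_iff]

/-- Lemma 2: under any coordination strategy `ψ`, conditioned on any positive-probability
mean-field history `z_{0:t}`, the joint state `X_t` is uniformly distributed on `H(z_t)`;
in particular this conditional law depends only on `z_t`, not on the earlier history or `ψ`. -/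
theorem stmt4 (n : ℕ) (hn : 1 ≤ n) (PX : PMF X) (PW : ℕ → PMF W)
    (f : ℕ → X → U → W → (X → ℕ) → X)
    (ψ : (t : ℕ) → (Fin (t + 1) → (X → ℕ)) → X → U)
    (t : ℕ) (z : Fin (t + 1) → (X → ℕ))
    (hz : 0 < ∑ xs ∈ Finset.univ.filter
        (fun xs : Fin (t + 1) → (Fin n → X) => ∀ s, emp (xs s) = z s),
        hist n PX PW f ψ t xs) :
    ∀ x : Fin n → X,
      (∑ xs ∈ Finset.univ.filter
          (fun xs : Fin (t + 1) → (Fin n → X) =>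
            (∀ s, emp (xs s) = z s) ∧ xs (Fin.last t) = x),
          hist n PX PW f ψ t xs)
        / (∑ xs ∈ Finset.univ.filter
            (fun xs : Fin (t + 1) → (Fin n → X) => ∀ s, emp (xs s) = z s),
            hist n PX PW f ψ t xs)
      = if x ∈ Hset n (z (Fin.last t)) then ((Hset n (z (Fin.last t))).card : ℝ≥0∞)⁻¹
        else 0 :=
  stmt4_general n PX PW f ψ t z hz
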